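/- arXiv:1408.6351 — 2 statements merged into one kernel-verified Lean document; each statement's English description precedes it below -/
import Mathlib

section
/- Let X be a finite pure d-dimensional simplicial complex, 1 ≤ i ≤ d, and let α ∈ C^i(X,F_2) be minimal, i.e. ||α|| = ||[α]||. Then α is locally minimal: for every vertex v, the induced cochain α_v is a minimal cochain in C^{i-1}(X_v,F_2). -/
open scoped Classical

structure SComplex (V : Type) [DecidableEq V] where
  faces : Finset (Finset V)
  down_closed : ∀ σ ∈ faces, ∀ τ ⊆ σ, τ ∈ faces

namespace SComplex

variable {V : Type} [Fintype V] [DecidableEq V]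

/-- The faces of cardinality `n` (i.e. of dimension `n-1`). -/
def K (X : SComplex V) (n : ℕ) : Finset (Finset V) := X.faces.filter fun σ => σ.card = n

/-- `X` is pure with all facets (maximal faces) of cardinality `D` (dimension `D-1`). -/
def IsPure (X : SComplex V) (D : ℕ) : Prop :=
  X.faces.Nonempty ∧ ∀ σ ∈ X.faces, ∃ τ ∈ X.faces, σ ⊆ τ ∧ τ.card = D

/-- `F₂`-cochains on the faces of cardinality `n` (the space `C^{n-1}(X,F₂)`). -/
abbrev Cochain (X : SComplex V) (n : ℕ) : Type := ↥(X.K n) → ZMod 2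

/-- The weight of a face `σ` of cardinality `n`, in a complex with facets of cardinality `D`:
`wt(σ) = c(σ) / (C(D,n) · #facets)` where `c(σ)` is the number of facets containing `σ`. -/
noncomputable def wt (X : SComplex V) (D n : ℕ) (σ : Finset V) : ℝ :=
  (((X.K D).filter fun τ => σ ⊆ τ).card : ℝ) / ((D.choose n : ℝ) * ((X.K D).card : ℝ))

/-- The norm `‖α‖ = Σ_{σ : α(σ)≠0} wt(σ)` of a cochain. -/
noncomputable def cnorm (X : SComplex V) (D n : ℕ) (α : X.Cochain n) : ℝ :=
  ∑ σ ∈ (X.K n).attach, if α σ ≠ 0 then X.wt D n σ.1 else 0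

/-- The coboundary map into level `n` (from cochains on faces of cardinality `n-1`). -/
def delta (X : SComplex V) (n : ℕ) (γ : X.Cochain (n - 1)) : X.Cochain n :=
  fun τ => ∑ σ ∈ (X.K (n - 1)).attach, if σ.1 ⊆ τ.1 then γ σ else 0

/-- `α` is a coboundary: `α ∈ B^{n-1}(X,F₂) = Image(δ)`. -/
def IsCobound (X : SComplex V) (n : ℕ) (α : X.Cochain n) : Prop :=
  ∃ γ : X.Cochain (n - 1), X.delta n γ = α

/-- `α` is a cocycle: `α ∈ Z^{n-1}(X,F₂) = Ker(δ)`. -/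
def IsCocycle (X : SComplex V) (n : ℕ) (α : X.Cochain n) : Prop :=
  X.delta (n + 1) α = 0

/-- `‖[α]‖ = min{‖γ‖ : γ ∈ α + B}`. -/
noncomputable def normClassB (X : SComplex V) (D n : ℕ) (α : X.Cochain n) : ℝ :=
  sInf {x : ℝ | ∃ β : X.Cochain n, X.IsCobound n β ∧ x = X.cnorm D n (α + β)}

/-- `‖{α}‖ = min{‖γ‖ : γ ∈ α + Z}`. -/
noncomputable def normClassZ (X : SComplex V) (D n : ℕ) (α : X.Cochain n) : ℝ :=
  sInf {x : ℝ | ∃ β : X.Cochain n, X.IsCocycle n β ∧ x = X.cnorm D n (α + β)}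

/-- The coboundary expansion `ε_{n-1}(X)` (for a complex with facets of cardinality `D`). -/
noncomputable def epsExp (X : SComplex V) (D n : ℕ) : ℝ :=
  sInf {x : ℝ | ∃ α : X.Cochain n, ¬ X.IsCobound n α ∧
    x = X.cnorm D (n + 1) (X.delta (n + 1) α) / X.normClassB D n α}

end SComplex

namespace SComplex

variable {V : Type} [Fintype V] [DecidableEq V]

/-- The link of `X` at a vertex `v`: the faces `σ` with `v ∉ σ` and `σ ∪ {v} ∈ X`. -/
def link (X : SComplex V) (v : V) : SComplex V where
  faces := X.faces.filter fun σ => v ∉ σ ∧ insert v σ ∈ X.faces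
  down_closed := by
    intro σ hσ τ hτ
    simp only [Finset.mem_filter] at hσ ⊢
    exact ⟨X.down_closed σ hσ.1 τ hτ, fun h => hσ.2.1 (hτ h),
      X.down_closed _ hσ.2.2 _ (Finset.insert_subset_insert v hτ)⟩

/-- The cochain `α_v` on the link induced by a cochain `α`: `α_v(σ∖{v}) = α(σ)`. -/
def localize (X : SComplex V) (v : V) (n : ℕ) (α : X.Cochain n) :
    (X.link v).Cochain (n - 1) :=
  fun σ => if h : insert v σ.1 ∈ X.K n then α ⟨insert v σ.1, h⟩ else 0

/-- `α` is minimal: its norm realizes the minimum over its class modulo coboundaries. -/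
def IsMinimal (X : SComplex V) (D n : ℕ) (α : X.Cochain n) : Prop :=
  ∀ γ : X.Cochain (n - 1), X.cnorm D n α ≤ X.cnorm D n (α + X.delta n γ)

/-- `α` is locally minimal: for every vertex `v` the induced cochain `α_v` is a
minimal cochain on the link `X_v` (a pure complex with facets of cardinality `D-1`). -/
def LocallyMinimal (X : SComplex V) (D n : ℕ) (α : X.Cochain n) : Prop :=
  ∀ v : V, (X.link v).IsMinimal (D - 1) (n - 1) (X.localize v n α)

end SComplex

/-!
Fix a vertex `v` and a cochain `γ` on the link `X_v`, one degree below `α_v`. Extending `γ` by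
zero to the faces through `v` gives a cochain `γ'` on `X` whose coboundary vanishes off `v` and
localizes to `δγ`. A face `τ ∋ v` lies in exactly as many facets of `X` as `τ ∖ {v}` does in `X_v`,
so its weight is a fixed positive multiple `c` of the weight of `τ ∖ {v}`; hence
`‖β‖ = (mass of β off v) + c‖β_v‖` for every `β`. In `‖α‖ ≤ ‖α + δγ'‖` the masses off `v`
agree, leaving `c‖α_v‖ ≤ c‖α_v + δγ‖`. If the normalizer of the link weights vanishes, all norms
on the link are `0`, since the weights are then divisions by zero.
-/

namespace SComplex

variable {V : Type} [DecidableEq V] (X : SComplex V) (v : V)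

lemma notMem_of_mem_link_K {n : ℕ} {ρ : Finset V} (hρ : ρ ∈ (X.link v).K n) : v ∉ ρ := by
  simp only [K, link, Finset.mem_filter] at hρ
  exact hρ.1.2.1

lemma insert_mem_K_of_mem_link_K {n : ℕ} {ρ : Finset V} (hρ : ρ ∈ (X.link v).K n) :
    insert v ρ ∈ X.K (n + 1) := by
  simp only [K, link, Finset.mem_filter] at hρ ⊢
  exact ⟨hρ.1.2.2, by rw [Finset.card_insert_of_notMem hρ.1.2.1, hρ.2]⟩

lemma erase_mem_link_K {n : ℕ} {σ : Finset V} (hσ : σ ∈ X.K (n + 1)) (hv : v ∈ σ) :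
    σ.erase v ∈ (X.link v).K n := by
  simp only [K, link, Finset.mem_filter] at hσ ⊢
  refine ⟨⟨X.down_closed σ hσ.1 _ (Finset.erase_subset v σ), Finset.notMem_erase v σ, ?_⟩, ?_⟩
  · rw [Finset.insert_erase hv]
    exact hσ.1
  · rw [Finset.card_erase_of_mem hv, hσ.2, Nat.add_sub_cancel]

lemma sum_filter_mem_eq_sum_link {M : Type*} [AddCommMonoid M] (n : ℕ)
    (f : X.K (n + 1) → M) :
    ∑ σ ∈ (X.K (n + 1)).attach with v ∈ σ.1, f σ
      = ∑ ρ ∈ ((X.link v).K n).attach, f ⟨insert v ρ, X.insert_mem_K_of_mem_link_K v ρ.2⟩ := by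
  refine Finset.sum_bij' (fun σ hσ => ⟨σ.1.erase v,
      X.erase_mem_link_K v σ.2 (Finset.mem_filter.mp hσ).2⟩)
    (fun ρ _ => ⟨insert v ρ, X.insert_mem_K_of_mem_link_K v ρ.2⟩)
    (fun _ _ => Finset.mem_attach _ _)
    (fun _ _ => Finset.mem_filter.mpr ⟨Finset.mem_attach _ _, Finset.mem_insert_self v _⟩)
    (fun σ hσ => Subtype.ext (Finset.insert_erase (Finset.mem_filter.mp hσ).2))
    (fun ρ _ => Subtype.ext (Finset.erase_insert (X.notMem_of_mem_link_K v ρ.2)))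
    (fun σ hσ => ?_)
  exact congrArg f (Subtype.ext (Finset.insert_erase (Finset.mem_filter.mp hσ).2).symm)

lemma card_filter_link_K_superset (D : ℕ) {ρ : Finset V} (hvρ : v ∉ ρ) :
    (((X.link v).K D).filter (ρ ⊆ ·)).card = ((X.K (D + 1)).filter (insert v ρ ⊆ ·)).card := by
  refine Finset.card_nbij' (insert v) (Finset.erase · v) (fun T hT => ?_) (fun T hT => ?_)
    (fun T hT => ?_) (fun T hT => ?_)
  all_goals simp only [Finset.coe_filter, Set.mem_ofPred_eq] at hT ⊢
  · exact ⟨X.insert_mem_K_of_mem_link_K v hT.1, Finset.insert_subset_insert v hT.2⟩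
  · have hvT := hT.2 (Finset.mem_insert_self v ρ)
    refine ⟨X.erase_mem_link_K v hT.1 hvT, ?_⟩
    rw [← Finset.erase_insert hvρ]
    exact Finset.erase_subset_erase v hT.2
  · exact Finset.erase_insert (X.notMem_of_mem_link_K v hT.1)
  · exact Finset.insert_erase (hT.2 (Finset.mem_insert_self v ρ))

def ofLink (n : ℕ) (γ : (X.link v).Cochain n) : X.Cochain (n + 1) :=
  fun σ => if h : v ∈ σ.1 ∧ σ.1.erase v ∈ (X.link v).K n then γ ⟨σ.1.erase v, h.2⟩ else 0

noncomputable def wtDenom (D n : ℕ) : ℝ := (D.choose n : ℝ) * ((X.K D).card : ℝ)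

noncomputable def cnormOff (D n : ℕ) (β : X.Cochain n) : ℝ :=
  ∑ σ ∈ (X.K n).attach with v ∉ σ.1, if β σ ≠ 0 then X.wt D n σ else 0

variable {X v}

lemma localize_apply {n : ℕ} (β : X.Cochain (n + 1)) (ρ : (X.link v).K n) :
    X.localize v (n + 1) β ρ = β ⟨insert v ρ, X.insert_mem_K_of_mem_link_K v ρ.2⟩ :=
  dif_pos _

lemma localize_add {n : ℕ} (β β' : X.Cochain n) :
    X.localize v n (β + β') = X.localize v n β + X.localize v n β' := by
  funext ρ
  simp only [localize, Pi.add_apply]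
  split_ifs <;> simp

lemma ofLink_of_notMem {n : ℕ} (γ : (X.link v).Cochain n) {σ : X.K (n + 1)} (hv : v ∉ σ.1) :
    X.ofLink v n γ σ = 0 :=
  dif_neg fun h => hv h.1

lemma ofLink_insert {n : ℕ} (γ : (X.link v).Cochain n) (ρ : (X.link v).K n) :
    X.ofLink v n γ ⟨insert v ρ, X.insert_mem_K_of_mem_link_K v ρ.2⟩ = γ ρ := by
  have hρ : (insert v ρ.1).erase v = ρ := Finset.erase_insert (X.notMem_of_mem_link_K v ρ.2)
  rw [ofLink, dif_pos ⟨Finset.mem_insert_self v _, by rw [hρ]; exact ρ.2⟩]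
  exact congrArg γ (Subtype.ext hρ)

lemma delta_ofLink_of_notMem {n : ℕ} (γ : (X.link v).Cochain n) {τ : X.K (n + 1 + 1)}
    (hv : v ∉ τ.1) : X.delta (n + 1 + 1) (X.ofLink v n γ) τ = 0 :=
  Finset.sum_eq_zero fun σ _ => by
    split_ifs with hστ
    · exact ofLink_of_notMem γ fun hvσ => hv (hστ hvσ)
    · rfl

lemma localize_delta_ofLink {n : ℕ} (γ : (X.link v).Cochain n) :
    X.localize v (n + 1 + 1) (X.delta (n + 1 + 1) (X.ofLink v n γ))
      = (X.link v).delta (n + 1) γ := by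
  funext ρ
  rw [localize_apply]
  change ∑ σ ∈ (X.K (n + 1)).attach, (if σ.1 ⊆ insert v ρ.1 then X.ofLink v n γ σ else 0) = _
  rw [← Finset.sum_filter_of_ne fun σ _ hne => by_contra fun hvσ => hne (by
      rw [ofLink_of_notMem γ hvσ, ite_self]), sum_filter_mem_eq_sum_link]
  refine Finset.sum_congr rfl fun σ _ => ?_
  simp only [ofLink_insert, Finset.insert_subset_insert_iff (X.notMem_of_mem_link_K v σ.2)]

lemma cnorm_eq_zero_of_wtDenom_eq_zero {D n : ℕ} (hZ : X.wtDenom D n = 0) (β : X.Cochain n) :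
    X.cnorm D n β = 0 :=
  Finset.sum_eq_zero fun σ _ => by
    change (if β σ ≠ 0 then _ / X.wtDenom D n else 0) = 0
    rw [hZ, div_zero, ite_self]

lemma wtDenom_pos_of_link_wtDenom_ne_zero {D n : ℕ} (hZ : (X.link v).wtDenom D n ≠ 0) :
    0 < X.wtDenom (D + 1) (n + 1) := by
  obtain ⟨hchoose, hcard⟩ := mul_ne_zero_iff.mp hZ
  have hnD : n ≤ D := by
    by_contra! h
    exact hchoose (by exact_mod_cast Nat.choose_eq_zero_of_lt h)
  obtain ⟨T, hT⟩ := Finset.card_ne_zero.mp (by exact_mod_cast hcard)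
  have hfacet : 0 < (X.K (D + 1)).card :=
    Finset.card_pos.mpr ⟨_, X.insert_mem_K_of_mem_link_K v hT⟩
  have hchoose_pos := Nat.choose_pos (Nat.succ_le_succ hnD)
  unfold wtDenom
  positivity

lemma wt_insert {D n : ℕ} (hZ : (X.link v).wtDenom D n ≠ 0) {ρ : Finset V} (hvρ : v ∉ ρ) :
    X.wt (D + 1) (n + 1) (insert v ρ)
      = (X.link v).wtDenom D n / X.wtDenom (D + 1) (n + 1) * (X.link v).wt D n ρ := by
  have hX := (wtDenom_pos_of_link_wtDenom_ne_zero hZ).ne'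
  change _ / X.wtDenom (D + 1) (n + 1) = _ * (_ / (X.link v).wtDenom D n)
  rw [X.card_filter_link_K_superset v D hvρ]
  field_simp

lemma cnormOff_add_of_eq_zero {D n : ℕ} (β η : X.Cochain n)
    (hη : ∀ σ : X.K n, v ∉ σ.1 → η σ = 0) :
    X.cnormOff v D n (β + η) = X.cnormOff v D n β :=
  Finset.sum_congr rfl fun σ hσ => by
    rw [Pi.add_apply, hη σ (Finset.mem_filter.mp hσ).2, add_zero]

lemma cnorm_eq_cnormOff_add {D n : ℕ} (hZ : (X.link v).wtDenom D n ≠ 0)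
    (β : X.Cochain (n + 1)) :
    X.cnorm (D + 1) (n + 1) β = X.cnormOff v (D + 1) (n + 1) β
      + (X.link v).wtDenom D n / X.wtDenom (D + 1) (n + 1)
        * (X.link v).cnorm D n (X.localize v (n + 1) β) := by
  unfold cnorm cnormOff
  rw [← Finset.sum_filter_not_add_sum_filter _ (fun σ => v ∈ σ.1), sum_filter_mem_eq_sum_link,
    Finset.mul_sum]
  refine congrArg _ (Finset.sum_congr rfl fun ρ _ => ?_)
  rw [localize_apply, wt_insert hZ (X.notMem_of_mem_link_K v ρ.2)]
  split_ifs <;> simp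

end SComplex

theorem minimal_implies_locally_minimal_general
    {V : Type} [DecidableEq V] (d i : ℕ) (hi1 : 1 ≤ i) (X : SComplex V)
    (α : X.Cochain (i + 1)) (hmin : X.IsMinimal (d + 1) (i + 1) α) :
    X.LocallyMinimal (d + 1) (i + 1) α := by
  obtain ⟨j, rfl⟩ := Nat.exists_eq_add_of_le' hi1
  intro v (γ : (X.link v).Cochain j)
  show (X.link v).cnorm d (j + 1) _ ≤ (X.link v).cnorm d (j + 1) (_ + (X.link v).delta (j + 1) γ)
  by_cases hZ : (X.link v).wtDenom d (j + 1) = 0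
  · simp only [SComplex.cnorm_eq_zero_of_wtDenom_eq_zero hZ, le_refl]
  have hc : 0 < (X.link v).wtDenom d (j + 1) / X.wtDenom (d + 1) (j + 1 + 1) :=
    div_pos (lt_of_le_of_ne (by unfold SComplex.wtDenom; positivity) (Ne.symm hZ))
      (SComplex.wtDenom_pos_of_link_wtDenom_ne_zero hZ)
  have h := hmin (X.ofLink v j γ)
  rw [SComplex.cnorm_eq_cnormOff_add hZ, SComplex.cnorm_eq_cnormOff_add hZ,
    SComplex.cnormOff_add_of_eq_zero α _ fun τ => SComplex.delta_ofLink_of_notMem γ,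
    SComplex.localize_add, SComplex.localize_delta_ofLink] at h
  exact le_of_mul_le_mul_left (le_of_add_le_add_left h) hc

/-- Let `X` be a finite pure `d`-dimensional simplicial complex,
`1 ≤ i ≤ d`, and let `α ∈ C^i(X,F₂)` be minimal (`‖α‖ = ‖[α]‖`).  Then `α` is locally
minimal: for every vertex `v`, the induced cochain `α_v` is minimal in `C^{i-1}(X_v,F₂)`. -/
theorem minimal_implies_locally_minimal
    {V : Type} [Fintype V] [DecidableEq V] (d i : ℕ) (hd : 1 ≤ d) (hi1 : 1 ≤ i)
    (hid : i ≤ d) (X : SComplex V) (hpure : X.IsPure (d + 1))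
    (α : X.Cochain (i + 1)) (hmin : X.IsMinimal (d + 1) (i + 1) α) :
    X.LocallyMinimal (d + 1) (i + 1) α :=
  minimal_implies_locally_minimal_general d i hi1 X α hmin
end

section
/- Let q ≥ 2, ε ∈ (0,1), and let G be a finite connected bipartite (q+1)-regular graph on Q vertices whose adjacency-matrix eigenvalues other than ±(q+1) all have absolute value at most √q. Then for every subset A of the vertices of G with |A| < (1−ε)Q/2: |E(A,Ā)| ≥ ((1+ε)/2)·(q+1−√q)·|A|. -/
/-!
Let `M` be the adjacency matrix, `L = (q+1)I - M` the Laplacian, `n = |V|` and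
`f = 1_A - (|A|/n)·1`. Since `L` kills constants, `|E(A,Ā)| = ⟨1_A, L 1_A⟩ = ⟨f, L f⟩`.
As `G` is connected, the eigenvectors for `q+1` are the constants, to which `f` is orthogonal;
expanding `f` in an orthonormal eigenbasis of `M` therefore gives `⟨f, M f⟩ ≤ √q ‖f‖²`
(the eigenvalue `-(q+1)` only helps). Hence
`|E(A,Ā)| ≥ (q+1-√q) ‖f‖² = (q+1-√q) |A| (1 - |A|/n)`, and `|A|/n < (1-ε)/2`.
-/

open scoped Classical
open Matrix Finset
open scoped RealInnerProductSpace

theorem LinearMap.IsSymmetric.inner_apply_self_le_of_forall_inner_eq_zero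
    {E : Type*} [NormedAddCommGroup E] [InnerProductSpace ℝ E] [FiniteDimensional ℝ E]
    {T : E →ₗ[ℝ] E} (hT : T.IsSymmetric) {l : ℝ} {x : E}
    (hx : ∀ μ v, Module.End.HasEigenvector T μ v → l < μ → ⟪v, x⟫ = 0) :
    ⟪T x, x⟫ ≤ l * ‖x‖ ^ 2 := by
  let b := hT.eigenvectorBasis rfl
  have hexpand : ⟪T x, x⟫ = ∑ i, hT.eigenvalues rfl i * ⟪b i, x⟫ ^ 2 := by
    rw [← b.sum_inner_mul_inner]
    refine Finset.sum_congr rfl fun i _ => ?_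
    rw [hT, hT.apply_eigenvectorBasis, real_inner_smul_right, real_inner_comm x]
    simp only [RCLike.ofReal_real_eq_id, id_eq, b]
    ring
  rw [hexpand, ← b.sum_sq_inner_right, Finset.mul_sum]
  refine Finset.sum_le_sum fun i _ => ?_
  rcases le_or_gt (hT.eigenvalues rfl i) l with hle | hlt
  · exact mul_le_mul_of_nonneg_right hle (sq_nonneg _)
  · rw [hx _ _ (hT.hasEigenvector_eigenvectorBasis rfl i) hlt]
    simp

namespace SimpleGraph

variable {V : Type*} [Fintype V] [DecidableEq V] {G : SimpleGraph V} [DecidableRel G.Adj]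

theorem IsRegularOfDegree.lapMatrix_eq {R : Type*} [Ring R] {d : ℕ} (hd : G.IsRegularOfDegree d) :
    G.lapMatrix R = (d : R) • 1 - G.adjMatrix R := by
  ext i j
  by_cases hij : i = j <;> simp [lapMatrix, degMatrix, diagonal, hij, hd.degree_eq]

theorem Connected.eq_of_adjMatrix_mulVec_eq_smul {d : ℕ} (hG : G.Connected)
    (hd : G.IsRegularOfDegree d) {v : V → ℝ} (hv : G.adjMatrix ℝ *ᵥ v = (d : ℝ) • v)
    (i j : V) :
    v i = v j := by
  have hlap : G.lapMatrix ℝ *ᵥ v = 0 := by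
    rw [hd.lapMatrix_eq, sub_mulVec, smul_mulVec, one_mulVec, hv, sub_self]
  exact (lapMatrix_mulVec_eq_zero_iff_forall_reachable G).mp hlap i j (hG.preconnected i j)

theorem dotProduct_adjMatrix_mulVec_le_of_sum_eq_zero {d : ℕ} (hG : G.Connected)
    (hd : G.IsRegularOfDegree d) {l : ℝ}
    (heig : ∀ μ : ℝ, (∃ f : V → ℝ, f ≠ 0 ∧ G.adjMatrix ℝ *ᵥ f = μ • f) → μ = d ∨ μ ≤ l)
    {f : V → ℝ} (hf : ∑ v, f v = 0) :
    f ⬝ᵥ (G.adjMatrix ℝ *ᵥ f) ≤ l * (f ⬝ᵥ f) := by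
  have hT := isSymmetric_toEuclideanLin_iff.mpr (G.isHermitian_adjMatrix ℝ)
  have hrayleigh :=
    hT.inner_apply_self_le_of_forall_inner_eq_zero (x := WithLp.toLp 2 f) (l := l) ?_
  · rw [← real_inner_self_eq_norm_sq, toLpLin_toLp, EuclideanSpace.inner_toLp_toLp,
      EuclideanSpace.inner_toLp_toLp, star_trivial, star_trivial] at hrayleigh
    simpa [dotProduct_comm f] using hrayleigh
  rintro μ v ⟨hv, hv0⟩ hlt
  rw [Module.End.mem_eigenspace_iff] at hv
  have hv' : G.adjMatrix ℝ *ᵥ v.ofLp = μ • v.ofLp := by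
    simpa only [ofLp_toLpLin, toLin'_apply, WithLp.ofLp_smul] using congrArg WithLp.ofLp hv
  have hμ : μ = d := (heig μ ⟨v.ofLp, by simpa using hv0, hv'⟩).resolve_right hlt.not_ge
  subst hμ
  obtain ⟨i₀⟩ := hG.nonempty
  have hconst := hG.eq_of_adjMatrix_mulVec_eq_smul hd hv'
  simp [PiLp.inner_apply, hconst _ i₀, ← Finset.sum_mul, hf]

theorem IsRegularOfDegree.dotProduct_lapMatrix_mulVec {R : Type*} [CommRing R] {d : ℕ}
    (hd : G.IsRegularOfDegree d) (x : V → R) :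
    x ⬝ᵥ (G.lapMatrix R *ᵥ x) = d * (x ⬝ᵥ x) - x ⬝ᵥ (G.adjMatrix R *ᵥ x) := by
  rw [hd.lapMatrix_eq, sub_mulVec, smul_mulVec, one_mulVec, dotProduct_sub, dotProduct_smul,
    smul_eq_mul]

theorem dotProduct_lapMatrix_mulVec_sub_const {R : Type*} [CommRing R] (x : V → R) (c : R) :
    (x - Function.const V c) ⬝ᵥ (G.lapMatrix R *ᵥ (x - Function.const V c)) =
      x ⬝ᵥ (G.lapMatrix R *ᵥ x) := by
  have hconst : G.lapMatrix R *ᵥ Function.const V c = 0 := by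
    ext i
    simp [lapMatrix_mulVec_apply]
  rw [mulVec_sub, hconst, sub_zero, sub_dotProduct, sub_eq_self, dotProduct_mulVec,
    ← mulVec_transpose, (G.isSymm_lapMatrix R).eq, hconst, zero_dotProduct]

theorem card_filter_edgeFinset_eq_card_interedges (s : Finset V) :
    #(G.edgeFinset.filter fun e => ∃ u ∈ e, ∃ w ∈ e, u ∈ s ∧ w ∉ s) =
      #(G.interedges s sᶜ) := by
  symm
  refine Finset.card_bij (fun p _ => s(p.1, p.2)) ?_ ?_ ?_
  · rintro ⟨u, w⟩ hp
    rw [mk_mem_interedges_iff, Finset.mem_compl] at hp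
    simp only [Finset.mem_filter, mem_edgeFinset, mem_edgeSet]
    exact ⟨hp.2.2, u, Sym2.mem_mk_left _ _, w, Sym2.mem_mk_right _ _, hp.1, hp.2.1⟩
  · rintro ⟨u, w⟩ hp ⟨u', w'⟩ hp' h
    rw [mk_mem_interedges_iff, Finset.mem_compl] at hp hp'
    rcases Sym2.mk_eq_mk_iff.mp h with h | h
    · exact h
    · simp only [Prod.swap_prod_mk, Prod.mk.injEq] at h
      exact absurd (h.1 ▸ hp.1) hp'.2.1
  · intro e he
    simp only [Finset.mem_filter, mem_edgeFinset] at he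
    obtain ⟨hadj, u, hu, w, hw, hus, hws⟩ := he
    induction e with
    | h x y =>
      rw [Sym2.mem_iff] at hu hw
      rcases hu with rfl | rfl <;> rcases hw with rfl | rfl
      · exact absurd hus hws
      · exact ⟨(u, w), by simpa [mk_mem_interedges_iff, hus, hws] using hadj, rfl⟩
      · exact ⟨(u, w), by simpa [mk_mem_interedges_iff, hus, hws] using hadj.symm,
          Sym2.eq_swap⟩
      · exact absurd hus hws

theorem card_interedges_compl_eq_dotProduct_lapMatrix (s : Finset V) :
    (#(G.interedges s sᶜ) : ℝ) =
      (s : Set V).indicator 1 ⬝ᵥ (G.lapMatrix ℝ *ᵥ (s : Set V).indicator 1) := by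
  have hcard : (#(G.interedges s sᶜ) : ℝ) =
      ∑ i, ∑ j, if G.Adj i j ∧ i ∈ s ∧ j ∉ s then 1 else 0 := by
    have hfilter : G.interedges s sᶜ =
        univ.filter fun p : V × V => G.Adj p.1 p.2 ∧ p.1 ∈ s ∧ p.2 ∉ s := by
      ext ⟨i, j⟩
      simp only [mk_mem_interedges_iff, mem_compl, mem_filter, mem_univ, true_and]
      tauto
    rw [hfilter, card_filter, Nat.cast_sum, Fintype.sum_prod_type]
    push_cast
    rfl
  rw [hcard, lapMatrix, sub_mulVec, dotProduct_sub, dotProduct_mulVec_degMatrix,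
    dotProduct_mulVec_adjMatrix, ← sum_sub_distrib]
  refine sum_congr rfl fun i _ => ?_
  rw [degree_eq_sum_if_adj, sum_mul, sum_mul, ← sum_sub_distrib]
  refine sum_congr rfl fun j _ => ?_
  by_cases hi : i ∈ s <;> by_cases hj : j ∈ s <;> by_cases hij : G.Adj i j <;>
    simp [hi, hj, hij]

end SimpleGraph

theorem Finset.sum_indicator_sub_const {V : Type*} [Fintype V] (s : Finset V) (c : ℝ) :
    ∑ v, ((s : Set V).indicator (1 : V → ℝ) - Function.const V c) v =
      #s - Fintype.card V * c := by
  simp [Finset.sum_sub_distrib, Set.indicator_apply]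

theorem Finset.dotProduct_self_indicator_sub_const {V : Type*} [Fintype V] (s : Finset V)
    (c : ℝ) :
    ((s : Set V).indicator (1 : V → ℝ) - Function.const V c) ⬝ᵥ
        ((s : Set V).indicator (1 : V → ℝ) - Function.const V c) =
      #s * (1 - 2 * c) + Fintype.card V * c ^ 2 := by
  have hpoint : ∀ v, ((s : Set V).indicator (1 : V → ℝ) - Function.const V c) v *
      ((s : Set V).indicator (1 : V → ℝ) - Function.const V c) v =
        (s : Set V).indicator 1 v * (1 - 2 * c) + c ^ 2 := by
    intro v
    by_cases hv : v ∈ s <;> simp [hv] <;> ring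
  simp only [dotProduct, hpoint, sum_add_distrib, ← sum_mul, sum_const, card_univ, nsmul_eq_mul]
  simp [Set.indicator_apply]

theorem bipartite_expander_edge_boundary_small_sets_general
    {V : Type} [Fintype V] [DecidableEq V] (q Q : ℕ)
    (ε : ℝ)
    (G : SimpleGraph V) (hconn : G.Connected) (hcard : Fintype.card V = Q)
    (hreg : ∀ v : V, G.degree v = q + 1)
    (heig : ∀ mu : ℝ, (∃ f : V → ℝ, f ≠ 0 ∧ G.adjMatrix ℝ *ᵥ f = mu • f) →
      mu = (q : ℝ) + 1 ∨ mu = -((q : ℝ) + 1) ∨ |mu| ≤ Real.sqrt q)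
    (A : Finset V) (hA : (A.card : ℝ) < (1 - ε) * (Q : ℝ) / 2) :
    ((G.edgeFinset.filter fun e => ∃ u ∈ e, ∃ w ∈ e, u ∈ A ∧ w ∉ A).card : ℝ) ≥
      ((1 + ε) / 2) * ((q : ℝ) + 1 - Real.sqrt q) * (A.card : ℝ) := by
  have hd : G.IsRegularOfDegree (q + 1) := hreg
  have hQ : (0 : ℝ) < Q := by
    refine Nat.cast_pos.mpr (Nat.pos_of_ne_zero fun hQ => ?_)
    simp only [hQ, CharP.cast_eq_zero, mul_zero, zero_div] at hA
    exact (Nat.cast_nonneg _).not_gt hA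
  set c : ℝ := #A / Q
  set f : V → ℝ := (A : Set V).indicator 1 - Function.const V c
  have hsum : ∑ v, f v = 0 := by
    rw [sum_indicator_sub_const, hcard, mul_div_cancel₀ _ hQ.ne', sub_self]
  have hnorm : f ⬝ᵥ f = #A * (1 - c) := by
    have hcQ : c * Q = #A := div_mul_cancel₀ _ hQ.ne'
    rw [dotProduct_self_indicator_sub_const, hcard]
    linear_combination c * hcQ
  have hspec : f ⬝ᵥ (G.adjMatrix ℝ *ᵥ f) ≤ √q * (f ⬝ᵥ f) := by
    refine SimpleGraph.dotProduct_adjMatrix_mulVec_le_of_sum_eq_zero hconn hd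
      (fun μ hμ => ?_) hsum
    rcases heig μ hμ with h | h | h
    · left; push_cast; exact h
    · right; rw [h]; linarith [Real.sqrt_nonneg q]
    · right; exact (le_abs_self μ).trans h
  have hc : c < (1 - ε) / 2 := by rw [div_lt_iff₀ hQ]; linarith
  have hsqrt : √q ≤ q + 1 := by
    nlinarith [Real.sq_sqrt (Nat.cast_nonneg (α := ℝ) q), Real.sqrt_nonneg q]
  calc (1 + ε) / 2 * (q + 1 - √q) * #A ≤ (q + 1 - √q) * (f ⬝ᵥ f) := by
        rw [hnorm]
        nlinarith [mul_nonneg (sub_nonneg.mpr hsqrt) (Nat.cast_nonneg (α := ℝ) #A)]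
    _ ≤ (q + 1 : ℕ) * (f ⬝ᵥ f) - f ⬝ᵥ (G.adjMatrix ℝ *ᵥ f) := by push_cast; linarith
    _ = f ⬝ᵥ (G.lapMatrix ℝ *ᵥ f) := (hd.dotProduct_lapMatrix_mulVec f).symm
    _ = (A : Set V).indicator 1 ⬝ᵥ (G.lapMatrix ℝ *ᵥ (A : Set V).indicator 1) :=
        SimpleGraph.dotProduct_lapMatrix_mulVec_sub_const _ c
    _ = #(G.interedges A Aᶜ) :=
        (SimpleGraph.card_interedges_compl_eq_dotProduct_lapMatrix A).symm
    _ = _ := by rw [SimpleGraph.card_filter_edgeFinset_eq_card_interedges]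

/-- Let `q ≥ 2`, `ε ∈ (0,1)`, and let `G` be a finite connected bipartite
`(q+1)`-regular graph on `Q` vertices whose adjacency eigenvalues other than `±(q+1)` have
absolute value at most `√q`.  Then every vertex subset `A` with `|A| < (1−ε)Q/2` satisfies
`|E(A,Ā)| ≥ ((1+ε)/2)(q+1−√q)|A|`. -/
theorem bipartite_expander_edge_boundary_small_sets
    {V : Type} [Fintype V] [DecidableEq V] (q Q : ℕ) (hq : 2 ≤ q)
    (ε : ℝ) (hε0 : 0 < ε) (hε1 : ε < 1)
    (G : SimpleGraph V) (hconn : G.Connected) (hcard : Fintype.card V = Q)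
    (hbip : ∃ C : V → Bool, ∀ u w, G.Adj u w → C u ≠ C w)
    (hreg : ∀ v : V, G.degree v = q + 1)
    (heig : ∀ mu : ℝ, (∃ f : V → ℝ, f ≠ 0 ∧ G.adjMatrix ℝ *ᵥ f = mu • f) →
      mu = (q : ℝ) + 1 ∨ mu = -((q : ℝ) + 1) ∨ |mu| ≤ Real.sqrt q)
    (A : Finset V) (hA : (A.card : ℝ) < (1 - ε) * (Q : ℝ) / 2) :
    ((G.edgeFinset.filter fun e => ∃ u ∈ e, ∃ w ∈ e, u ∈ A ∧ w ∉ A).card : ℝ) ≥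
      ((1 + ε) / 2) * ((q : ℝ) + 1 - Real.sqrt q) * (A.card : ℝ) :=
  bipartite_expander_edge_boundary_small_sets_general q Q ε G hconn hcard hreg heig A hA
end
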